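/- arXiv:math/0501251 — 2 statements merged into one kernel-verified Lean document; each statement's English description precedes it below -/
import Mathlib

section
/- For formal power series in z (or for |z| small enough that both sides converge), one has the identity (1-z)·₂φ₁(a, b; aq/b; q, zq/b) = ₄φ₃(a^{1/2}q^{1/2}, -a^{1/2}q^{1/2}, aq^{-1}, bq^{-1}; a^{1/2}q^{-1/2}, -a^{1/2}q^{-1/2}, aq/b; q, zq/b), i.e. the coefficient of z^n on the left equals the coefficient of z^n on the right for every n ≥ 0. -/
/-!
Let `t m` be the `m`-th term of the ₂φ₁ series. The coefficient of `z^(m+1)` on the left is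
`t (m+1) - t m`; after cancelling the factors common to both terms only the bracket
`(1 - a q^m)(1 - b q^m) q/b - (1 - a q^(m+1)/b)(1 - q^(m+1))` is left, and it factors as
`(q/b - 1)(1 - a q^(2m+1))`. On the right, `(c; q)_n (-c; q)_n = (c²; q²)_n` turns the four
square-root parameters into `(aq; q²)_n / (a/q; q²)_n`, which telescopes to
`(1 - a q^(2n-1)) / (1 - a/q)`, while `(a/q; q)_n (b/q; q)_n` contributes `(1 - a/q)(1 - b/q)`
times factorials of length `n - 1`. Both sides reduce to the same product.
-/

/-- The q-shifted factorial `(a;q)_n = ∏_{k=0}^{n-1} (1 - a q^k)`. -/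
def qp (q a : ℂ) (n : ℕ) : ℂ := ∏ k ∈ Finset.range n, (1 - a * q ^ k)

lemma qp_zero (q a : ℂ) : qp q a 0 = 1 :=
  Finset.prod_range_zero _

lemma qp_succ (q a : ℂ) (n : ℕ) : qp q a (n + 1) = qp q a n * (1 - a * q ^ n) :=
  Finset.prod_range_succ _ _

lemma qp_succ' (q a : ℂ) (n : ℕ) : qp q a (n + 1) = (1 - a) * qp q (a * q) n := by
  rw [qp, Finset.prod_range_succ', pow_zero, mul_one, mul_comm, qp]
  congr 1
  refine Finset.prod_congr rfl fun k _ => ?_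
  ring

lemma qp_mul_inv_succ (q a : ℂ) (hq : q ≠ 0) (n : ℕ) :
    qp q (a * q⁻¹) (n + 1) = (1 - a * q⁻¹) * qp q a n := by
  rw [qp_succ', inv_mul_cancel_right₀ hq]

lemma qp_mul_qp_neg (q c : ℂ) (n : ℕ) : qp q c n * qp q (-c) n = qp (q ^ 2) (c ^ 2) n := by
  simp only [qp, ← Finset.prod_mul_distrib, ← pow_mul, mul_comm 2]
  refine Finset.prod_congr rfl fun k _ => ?_
  ring

lemma one_sub_mul_qp_sqrt (q a ra rq : ℂ) (hra : ra ^ 2 = a) (hrq : rq ^ 2 = q) (hq : q ≠ 0)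
    (n : ℕ) :
    (1 - a * q⁻¹) * (qp q (ra * rq) (n + 1) * qp q (-(ra * rq)) (n + 1))
      = (1 - a * q ^ (2 * n + 1)) * (qp q (ra * rq⁻¹) (n + 1) * qp q (-(ra * rq⁻¹)) (n + 1)) := by
  have hsq : (ra * rq⁻¹) ^ 2 = a * q⁻¹ := by rw [mul_pow, hra, inv_pow, hrq]
  have hsq' : (ra * rq) ^ 2 = a * q⁻¹ * q ^ 2 := by
    rw [mul_pow, hra, hrq]; field_simp
  have htop : a * q⁻¹ * (q ^ 2) ^ (n + 1) = a * q ^ (2 * n + 1) := by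
    rw [← pow_mul, show 2 * (n + 1) = 2 * n + 1 + 1 by ring, pow_succ]
    field_simp
  rw [qp_mul_qp_neg, qp_mul_qp_neg, hsq, hsq', ← qp_succ', qp_succ, htop, mul_comm]

lemma two_phi_one_bracket (q a b : ℂ) (hb : b ≠ 0) (m : ℕ) :
    (1 - a * q ^ m) * (1 - b * q ^ m) * (q / b) - (1 - a * q / b * q ^ m) * (1 - q * q ^ m)
      = (q / b - 1) * (1 - a * q ^ (2 * m + 1)) := by
  field_simp
  ring

lemma two_phi_one_term_succ_sub (q a b : ℂ) (hb : b ≠ 0) (m : ℕ)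
    (hc : qp q (a * q / b) (m + 1) ≠ 0) (hqq : qp q q (m + 1) ≠ 0) :
    qp q a (m + 1) * qp q b (m + 1) / (qp q (a * q / b) (m + 1) * qp q q (m + 1))
        * (q / b) ^ (m + 1)
      - qp q a m * qp q b m / (qp q (a * q / b) m * qp q q m) * (q / b) ^ m
      = (q / b - 1) * (1 - a * q ^ (2 * m + 1)) * (qp q a m * qp q b m)
          / (qp q (a * q / b) (m + 1) * qp q q (m + 1)) * (q / b) ^ m := by
  rw [qp_succ] at hc hqq
  have huv := mul_ne_zero (right_ne_zero_of_mul hc) (right_ne_zero_of_mul hqq)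
  rw [← two_phi_one_bracket q a b hb m, qp_succ q a, qp_succ q b, qp_succ q (a * q / b),
    qp_succ q q, ← mul_div_mul_right (qp q a m * qp q b m) _ huv]
  ring

lemma four_phi_three_term_succ (q a b ra rq : ℂ) (hra : ra ^ 2 = a) (hrq : rq ^ 2 = q)
    (hq : q ≠ 0) (hb : b ≠ 0) (m : ℕ)
    (hP : qp q (ra * rq⁻¹) (m + 1) ≠ 0) (hP' : qp q (-(ra * rq⁻¹)) (m + 1) ≠ 0) :
    qp q (ra * rq) (m + 1) * qp q (-(ra * rq)) (m + 1) * qp q (a * q⁻¹) (m + 1)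
          * qp q (b * q⁻¹) (m + 1)
        / (qp q (ra * rq⁻¹) (m + 1) * qp q (-(ra * rq⁻¹)) (m + 1) * qp q (a * q / b) (m + 1)
          * qp q q (m + 1)) * (q / b) ^ (m + 1)
      = (q / b - 1) * (1 - a * q ^ (2 * m + 1)) * (qp q a m * qp q b m)
          / (qp q (a * q / b) (m + 1) * qp q q (m + 1)) * (q / b) ^ m := by
  rw [qp_mul_inv_succ q a hq, qp_mul_inv_succ q b hq, pow_succ,
    show ∀ G X Y : ℂ, G * ((1 - a * q⁻¹) * X) * Y = (1 - a * q⁻¹) * G * X * Y by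
      intros; ring, one_sub_mul_qp_sqrt q a ra rq hra hrq hq m]
  generalize qp q (ra * rq⁻¹) (m + 1) = P at hP ⊢
  generalize qp q (-(ra * rq⁻¹)) (m + 1) = P' at hP' ⊢
  field_simp

/-- Coefficientwise identity
`(1-z)·₂φ₁(a, b; aq/b; q, zq/b) = ₄φ₃(√a·√q, -√a·√q, a/q, b/q; √a/√q, -√a/√q, aq/b; q, zq/b)`. -/
theorem stmt0 (q a b ra rq : ℂ) (hra : ra ^ 2 = a) (hrq : rq ^ 2 = q)
    (hq : q ≠ 0) (hb : b ≠ 0)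
    (h1 : ∀ n, qp q (a * q / b) n ≠ 0) (h2 : ∀ n, qp q q n ≠ 0)
    (h3 : ∀ n, qp q (ra * rq⁻¹) n ≠ 0) (h4 : ∀ n, qp q (-(ra * rq⁻¹)) n ≠ 0) :
    ∀ n : ℕ,
      (qp q a n * qp q b n / (qp q (a * q / b) n * qp q q n)) * (q / b) ^ n
        - (if n = 0 then 0 else
            (qp q a (n - 1) * qp q b (n - 1)
              / (qp q (a * q / b) (n - 1) * qp q q (n - 1))) * (q / b) ^ (n - 1))
      = (qp q (ra * rq) n * qp q (-(ra * rq)) n * qp q (a * q⁻¹) n * qp q (b * q⁻¹) n)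
          / (qp q (ra * rq⁻¹) n * qp q (-(ra * rq⁻¹)) n * qp q (a * q / b) n * qp q q n)
          * (q / b) ^ n := by
  rintro (_ | m)
  · simp [qp_zero]
  · rw [if_neg m.succ_ne_zero, Nat.add_sub_cancel,
      two_phi_one_term_succ_sub q a b hb m (h1 _) (h2 _),
      four_phi_three_term_succ q a b ra rq hra hrq hq hb m (h3 _) (h4 _)]
end

section
/- Let C̃ = (c̃_{ij})_{i,j≥0} be the lower triangular matrix with c̃_{ij} = ((s q^{2j+1} t^{-1}; q)_{i-j} (q t^{-1}; q)_{i-j}) / ((s q^{2j+1}; q)_{i-j} (q; q)_{i-j}) · t^{i-j} for i ≥ j (and 0 otherwise), and let D = (d_{ij}) with d_{ij} = ((s q^{i+j+1} t^{-1}; q)_{i-j} (t; q)_{i-j}) / ((s q^{i+j}; q)_{i-j} (q; q)_{i-j}) for i ≥ j (and 0 otherwise). Then for all i ≥ j, Σ_{k=j}^{i} c̃_{ik} d_{kj} = 1. -/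
namespace Stmt3Aux

lemma qp_zero (q a : ℂ) : qp q a 0 = 1 := by simp [qp]

lemma qp_one (q a : ℂ) : qp q a 1 = 1 - a := by simp [qp]

lemma qp_succ (q a : ℂ) (n : ℕ) : qp q a (n+1) = qp q a n * (1 - a * q ^ n) := by
  simp [qp, Finset.prod_range_succ]

lemma qp_split (q a : ℂ) (m n : ℕ) : qp q a (m+n) = qp q a m * qp q (a * q ^ m) n := by
  unfold qp
  rw [Finset.prod_range_add]
  congr 1
  refine Finset.prod_congr rfl fun k _ => ?_
  rw [pow_add]; ring_nf

lemma qp_split' (q a b : ℂ) (m n : ℕ) (h : a * q ^ m = b) :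
    qp q a (m+n) = qp q a m * qp q b n := by rw [qp_split, h]

lemma qp_ne_zero {q a : ℂ} {n : ℕ} (h : ∀ k, k < n → 1 - a * q ^ k ≠ 0) : qp q a n ≠ 0 := by
  rw [qp]
  exact Finset.prod_ne_zero_iff.mpr fun k hk => h k (Finset.mem_range.mp hk)

lemma qpA_ne {q a : ℂ} (hA : ∀ e : ℕ, 1 ≤ e → 1 - a * q ^ e ≠ 0) (e n : ℕ) (he : 1 ≤ e) :
    qp q (a * q ^ e) n ≠ 0 := by
  apply qp_ne_zero
  intro k _
  have h := hA (e + k) (by omega)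
  rw [pow_add, ← mul_assoc] at h
  exact h

lemma qpQ_ne {q : ℂ} (hQ : ∀ e : ℕ, 1 ≤ e → 1 - q ^ e ≠ 0) (n : ℕ) : qp q q n ≠ 0 := by
  apply qp_ne_zero
  intro k _
  have h := hQ (k + 1) (by omega)
  rw [pow_succ, mul_comm (q ^ k) q] at h
  exact h

/-- The summand `c̃_{i,k} d_{k,j}` with `M = i-k`, `l = k-j`, `a = s q^{2j}`. -/
noncomputable def Fc (q t a : ℂ) (M l : ℕ) : ℂ :=
  qp q (a * q ^ (2*l+1) * t⁻¹) M * qp q (q * t⁻¹) M * qp q (a * q ^ (l+1) * t⁻¹) l * qp q t l * t ^ M /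
  (qp q (a * q ^ (2*l+1)) M * qp q q M * qp q (a * q ^ l) l * qp q q l)

/-- The WZ certificate, with `M = m - l` where `m` is the current row length. -/
noncomputable def Gc (q t a : ℂ) (M l : ℕ) : ℂ :=
  (-(t ^ M * (1 - a * q ^ (2*(l+M)) * t⁻¹) * (1 - q ^ l) * (1 - a * q ^ (2*l+M)) *
    qp q (a * q ^ l * t⁻¹) M * qp q (a * q ^ (l+M+1) * t⁻¹) (l-1) * qp q (q * t⁻¹) M * qp q t l)) /
  ((1 - q ^ (l+M)) * (1 - a * q ^ (2*l)) * qp q (a * q ^ (2*l+1)) M * qp q q M * qp q (a * q ^ l) l * qp q q l)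

lemma gzero (q t a : ℂ) (M : ℕ) : Gc q t a M 0 = 0 := by
  simp [Gc]

/-- The fundamental rational identity `E1 - E2 = E3 - E4` (generic case `l ≥ 1`). -/
lemma eE (q t a : ℂ) (ht : t ≠ 0) (p M : ℕ) :
    (1 - a*q^(p+M+2)*t⁻¹) * (1 - a*q^(2*p+M+3)*t⁻¹) * (1 - q^(M+1)*t⁻¹) * t^(M+1) *
      ((1 - a*q^(2*p+M+4)) * (1 - a*q^(2*p+2)) * (1 - a*q^(2*p+3)) * (1 - q^(p+2)) * (1 - q^(p+M+2)))
    - (1 - a*q^(p+M+2)*t⁻¹) * t^M *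
      ((1 - a*q^(2*p+M+3)) * (1 - a*q^(2*p+M+4)) * (1 - q^(M+1)) * (1 - a*q^(2*p+2)) * (1 - a*q^(2*p+3)) * (1 - q^(p+2)) * (1 - q^(p+M+2)))
    = (-(t^M * (1 - a*q^(2*p+2*M+4)*t⁻¹) * (1 - q^(p+2)) * (1 - a*q^(2*p+M+4)) * (1 - a*q^(2*p+M+3)*t⁻¹) * (1 - t*q^(p+1)) *
        ((1 - a*q^(2*p+3)) * (1 - q^(M+1)) * (1 - a*q^(p+1)))))
    - (-(t^(M+1) * (1 - a*q^(2*p+2*M+4)*t⁻¹) * (1 - q^(p+1)) * (1 - a*q^(2*p+M+3)) * (1 - a*q^(p+1)*t⁻¹) * (1 - q^(M+1)*t⁻¹) *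
        ((1 - a*q^(2*p+M+4)) * (1 - a*q^(2*p+3)) * (1 - q^(p+2))))) := by
  field_simp
  ring

/-- The fundamental rational identity for the boundary case `l = 0`. -/
lemma eE0 (q t a : ℂ) (ht : t ≠ 0) (M : ℕ) :
    (1 - a*q^(M+1)*t⁻¹) * (1 - q^(M+1)*t⁻¹) * t^(M+1) *
      ((1 - a*q^(M+2)) * (1 - q^(M+1)) * (1 - q^1))
    - t^M * ((1 - a*q^(M+1)) * (1 - a*q^(M+2)) * (1 - q^(M+1)) * (1 - q^(M+1)) * (1 - q^1))
    = -(t^M * (1 - a*q^(2*M+2)*t⁻¹) * (1 - q^1) * (1 - a*q^(M+2)) * (1 - t) * (1 - q^(M+1))) := by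
  field_simp
  ring

lemma clearA (q t a : ℂ) (hA : ∀ e : ℕ, 1 ≤ e → 1 - a * q ^ e ≠ 0)
    (hQ : ∀ e : ℕ, 1 ≤ e → 1 - q ^ e ≠ 0) (p M : ℕ) :
    Fc q t a (M+1) (p+1) *
      (qp q (a * q ^ (2*p+3)) (M+2) * qp q q (M+1) * qp q (a * q ^ (p+1)) (p+3) * qp q q (p+2) * (1 - q ^ (p+M+2)))
    = (qp q (a * q ^ (p+2) * t⁻¹) M * qp q (a * q ^ (p+M+3) * t⁻¹) p * qp q (q * t⁻¹) M * qp q t (p+1)) *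
      ((1 - a*q^(p+M+2)*t⁻¹) * (1 - a*q^(2*p+M+3)*t⁻¹) * (1 - q^(M+1)*t⁻¹) * t^(M+1) *
        ((1 - a*q^(2*p+M+4)) * (1 - a*q^(2*p+2)) * (1 - a*q^(2*p+3)) * (1 - q^(p+2)) * (1 - q^(p+M+2)))) := by
  have hU1 : qp q (a * q ^ (2*p+3)) (M+1) ≠ 0 := qpA_ne hA _ _ (by omega)
  have hU2 : qp q q (M+1) ≠ 0 := qpQ_ne hQ _
  have hU3 : qp q (a * q ^ (p+1)) (p+1) ≠ 0 := qpA_ne hA _ _ (by omega)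
  have hU4 : qp q q (p+1) ≠ 0 := qpQ_ne hQ _
  have hden := mul_ne_zero (mul_ne_zero (mul_ne_zero hU1 hU2) hU3) hU4
  rw [Fc]
  rw [show 2*(p+1)+1 = 2*p+3 from by ring]
  rw [show (p+1)+1 = p+2 from rfl]
  rw [div_mul_eq_mul_div, div_eq_iff hden]
  have e1 : qp q (a*q^(p+2)*t⁻¹) ((p+1)+(M+1))
      = qp q (a*q^(p+2)*t⁻¹) (p+1) * qp q (a*q^(2*p+3)*t⁻¹) (M+1) :=
    qp_split' q _ _ (p+1) (M+1) (by ring)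
  have e2 : qp q (a*q^(p+2)*t⁻¹) ((p+1)+(M+1))
      = qp q (a*q^(p+2)*t⁻¹) M * qp q (a*q^(p+M+3)*t⁻¹) p *
        ((1 - a*q^(p+M+2)*t⁻¹) * (1 - a*q^(2*p+M+3)*t⁻¹)) := by
    rw [show (p+1)+(M+1) = M + (1 + (p + 1)) from by omega,
        qp_split' q (a*q^(p+2)*t⁻¹) (a*q^(p+M+2)*t⁻¹) M (1+(p+1)) (by ring),
        qp_split' q (a*q^(p+M+2)*t⁻¹) (a*q^(p+M+3)*t⁻¹) 1 (p+1) (by ring),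
        qp_split' q (a*q^(p+M+3)*t⁻¹) (a*q^(2*p+M+3)*t⁻¹) p 1 (by ring),
        qp_one, qp_one]
    ring
  have hn1 : qp q (a*q^(2*p+3)*t⁻¹) (M+1) * qp q (a*q^(p+2)*t⁻¹) (p+1)
      = qp q (a*q^(p+2)*t⁻¹) M * qp q (a*q^(p+M+3)*t⁻¹) p *
        ((1 - a*q^(p+M+2)*t⁻¹) * (1 - a*q^(2*p+M+3)*t⁻¹)) := by
    linear_combination e2 - e1
  have h2 : qp q (q*t⁻¹) (M+1) = qp q (q*t⁻¹) M * (1 - q^(M+1)*t⁻¹) := by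
    rw [qp_succ]; ring
  have hs1 : qp q (a*q^(2*p+3)) (M+2) = qp q (a*q^(2*p+3)) (M+1) * (1 - a*q^(2*p+M+4)) := by
    rw [show M+2 = (M+1)+1 from rfl, qp_succ]; ring
  have hs2 : qp q (a*q^(p+1)) (p+3)
      = qp q (a*q^(p+1)) (p+1) * ((1 - a*q^(2*p+2)) * (1 - a*q^(2*p+3))) := by
    rw [show p+3 = (p+1)+1+1 from by omega, qp_succ, qp_succ]; ring
  have hs3 : qp q q (p+2) = qp q q (p+1) * (1 - q^(p+2)) := by
    rw [show p+2 = (p+1)+1 from rfl, qp_succ]; ring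
  rw [h2, hs1, hs2, hs3]
  linear_combination (qp q (q*t⁻¹) M * (1 - q^(M+1)*t⁻¹) * qp q t (p+1) * t^(M+1) *
    (qp q (a*q^(2*p+3)) (M+1) * (1 - a*q^(2*p+M+4)) * qp q q (M+1) *
      (qp q (a*q^(p+1)) (p+1) * ((1 - a*q^(2*p+2)) * (1 - a*q^(2*p+3)))) *
      (qp q q (p+1) * (1 - q^(p+2))) * (1 - q^(p+M+2)))) * hn1

lemma clearB (q t a : ℂ) (hA : ∀ e : ℕ, 1 ≤ e → 1 - a * q ^ e ≠ 0)
    (hQ : ∀ e : ℕ, 1 ≤ e → 1 - q ^ e ≠ 0) (p M : ℕ) :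
    Fc q t a M (p+1) *
      (qp q (a * q ^ (2*p+3)) (M+2) * qp q q (M+1) * qp q (a * q ^ (p+1)) (p+3) * qp q q (p+2) * (1 - q ^ (p+M+2)))
    = (qp q (a * q ^ (p+2) * t⁻¹) M * qp q (a * q ^ (p+M+3) * t⁻¹) p * qp q (q * t⁻¹) M * qp q t (p+1)) *
      ((1 - a*q^(p+M+2)*t⁻¹) * t^M *
        ((1 - a*q^(2*p+M+3)) * (1 - a*q^(2*p+M+4)) * (1 - q^(M+1)) * (1 - a*q^(2*p+2)) * (1 - a*q^(2*p+3)) * (1 - q^(p+2)) * (1 - q^(p+M+2)))) := by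
  have hU1 : qp q (a * q ^ (2*p+3)) M ≠ 0 := qpA_ne hA _ _ (by omega)
  have hU2 : qp q q M ≠ 0 := qpQ_ne hQ _
  have hU3 : qp q (a * q ^ (p+1)) (p+1) ≠ 0 := qpA_ne hA _ _ (by omega)
  have hU4 : qp q q (p+1) ≠ 0 := qpQ_ne hQ _
  have hden := mul_ne_zero (mul_ne_zero (mul_ne_zero hU1 hU2) hU3) hU4
  rw [Fc]
  rw [show 2*(p+1)+1 = 2*p+3 from by ring]
  rw [show (p+1)+1 = p+2 from rfl]
  rw [div_mul_eq_mul_div, div_eq_iff hden]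
  have e1 : qp q (a*q^(p+2)*t⁻¹) ((p+1)+M)
      = qp q (a*q^(p+2)*t⁻¹) (p+1) * qp q (a*q^(2*p+3)*t⁻¹) M :=
    qp_split' q _ _ (p+1) M (by ring)
  have e2 : qp q (a*q^(p+2)*t⁻¹) ((p+1)+M)
      = qp q (a*q^(p+2)*t⁻¹) M * qp q (a*q^(p+M+3)*t⁻¹) p * (1 - a*q^(p+M+2)*t⁻¹) := by
    rw [show (p+1)+M = M + (1 + p) from by omega,
        qp_split' q (a*q^(p+2)*t⁻¹) (a*q^(p+M+2)*t⁻¹) M (1+p) (by ring),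
        qp_split' q (a*q^(p+M+2)*t⁻¹) (a*q^(p+M+3)*t⁻¹) 1 p (by ring),
        qp_one]
    ring
  have hn1 : qp q (a*q^(2*p+3)*t⁻¹) M * qp q (a*q^(p+2)*t⁻¹) (p+1)
      = qp q (a*q^(p+2)*t⁻¹) M * qp q (a*q^(p+M+3)*t⁻¹) p * (1 - a*q^(p+M+2)*t⁻¹) := by
    linear_combination e2 - e1
  have hs1 : qp q (a*q^(2*p+3)) (M+2)
      = qp q (a*q^(2*p+3)) M * ((1 - a*q^(2*p+M+3)) * (1 - a*q^(2*p+M+4))) := by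
    rw [show M+2 = M+1+1 from rfl, qp_succ, qp_succ]; ring
  have hs2 : qp q q (M+1) = qp q q M * (1 - q^(M+1)) := by
    rw [qp_succ]; ring
  have hs3 : qp q (a*q^(p+1)) (p+3)
      = qp q (a*q^(p+1)) (p+1) * ((1 - a*q^(2*p+2)) * (1 - a*q^(2*p+3))) := by
    rw [show p+3 = (p+1)+1+1 from by omega, qp_succ, qp_succ]; ring
  have hs4 : qp q q (p+2) = qp q q (p+1) * (1 - q^(p+2)) := by
    rw [show p+2 = (p+1)+1 from rfl, qp_succ]; ring
  rw [hs1, hs2, hs3, hs4]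
  linear_combination (qp q (q*t⁻¹) M * qp q t (p+1) * t^M *
    (qp q (a*q^(2*p+3)) M * ((1 - a*q^(2*p+M+3)) * (1 - a*q^(2*p+M+4))) *
      (qp q q M * (1 - q^(M+1))) *
      (qp q (a*q^(p+1)) (p+1) * ((1 - a*q^(2*p+2)) * (1 - a*q^(2*p+3)))) *
      (qp q q (p+1) * (1 - q^(p+2))) * (1 - q^(p+M+2)))) * hn1

lemma clearC (q t a : ℂ) (hA : ∀ e : ℕ, 1 ≤ e → 1 - a * q ^ e ≠ 0)
    (hQ : ∀ e : ℕ, 1 ≤ e → 1 - q ^ e ≠ 0) (p M : ℕ) :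
    Gc q t a M (p+2) *
      (qp q (a * q ^ (2*p+3)) (M+2) * qp q q (M+1) * qp q (a * q ^ (p+1)) (p+3) * qp q q (p+2) * (1 - q ^ (p+M+2)))
    = (qp q (a * q ^ (p+2) * t⁻¹) M * qp q (a * q ^ (p+M+3) * t⁻¹) p * qp q (q * t⁻¹) M * qp q t (p+1)) *
      (-(t^M * (1 - a*q^(2*p+2*M+4)*t⁻¹) * (1 - q^(p+2)) * (1 - a*q^(2*p+M+4)) * (1 - a*q^(2*p+M+3)*t⁻¹) * (1 - t*q^(p+1)) *
        ((1 - a*q^(2*p+3)) * (1 - q^(M+1)) * (1 - a*q^(p+1))))) := by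
  have hV1 : (1 : ℂ) - q ^ (p+M+2) ≠ 0 := hQ _ (by omega)
  have hV2 : (1 : ℂ) - a * q ^ (2*p+4) ≠ 0 := hA _ (by omega)
  have hV3 : qp q (a * q ^ (2*p+5)) M ≠ 0 := qpA_ne hA _ _ (by omega)
  have hV4 : qp q q M ≠ 0 := qpQ_ne hQ _
  have hV5 : qp q (a * q ^ (p+2)) (p+2) ≠ 0 := qpA_ne hA _ _ (by omega)
  have hV6 : qp q q (p+2) ≠ 0 := qpQ_ne hQ _
  have hden := mul_ne_zero (mul_ne_zero (mul_ne_zero (mul_ne_zero (mul_ne_zero hV1 hV2) hV3) hV4) hV5) hV6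
  rw [Gc]
  rw [show 2*((p+2)+M) = 2*p+2*M+4 from by ring]
  rw [show 2*(p+2)+M = 2*p+M+4 from by ring]
  rw [show (p+2)+M+1 = p+M+3 from by omega]
  rw [show (p+2)-1 = p+1 from rfl]
  rw [show (p+2)+M = p+M+2 from by omega]
  rw [show 2*(p+2)+1 = 2*p+5 from by ring]
  rw [show 2*(p+2) = 2*p+4 from by ring]
  rw [div_mul_eq_mul_div, div_eq_iff hden]
  have hc1 : qp q (a*q^(p+M+3)*t⁻¹) (p+1)
      = qp q (a*q^(p+M+3)*t⁻¹) p * (1 - a*q^(2*p+M+3)*t⁻¹) := by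
    rw [qp_succ]; ring
  have hc2 : qp q t (p+2) = qp q t (p+1) * (1 - t*q^(p+1)) := by
    rw [show p+2 = (p+1)+1 from rfl, qp_succ]
  have hc3 : qp q (a*q^(2*p+3)) (M+2)
      = (1 - a*q^(2*p+3)) * ((1 - a*q^(2*p+4)) * qp q (a*q^(2*p+5)) M) := by
    rw [show M+2 = 1+(1+M) from by omega,
        qp_split' q (a*q^(2*p+3)) (a*q^(2*p+4)) 1 (1+M) (by ring),
        qp_split' q (a*q^(2*p+4)) (a*q^(2*p+5)) 1 M (by ring),
        qp_one, qp_one]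
  have hc4 : qp q (a*q^(p+1)) (p+3) = (1 - a*q^(p+1)) * qp q (a*q^(p+2)) (p+2) := by
    rw [show p+3 = 1+(p+2) from by omega,
        qp_split' q (a*q^(p+1)) (a*q^(p+2)) 1 (p+2) (by ring), qp_one]
  have hc5 : qp q q (M+1) = qp q q M * (1 - q^(M+1)) := by
    rw [qp_succ]; ring
  rw [hc1, hc2, hc3, hc4, hc5]
  ring

lemma clearD (q t a : ℂ) (hA : ∀ e : ℕ, 1 ≤ e → 1 - a * q ^ e ≠ 0)
    (hQ : ∀ e : ℕ, 1 ≤ e → 1 - q ^ e ≠ 0) (p M : ℕ) :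
    Gc q t a (M+1) (p+1) *
      (qp q (a * q ^ (2*p+3)) (M+2) * qp q q (M+1) * qp q (a * q ^ (p+1)) (p+3) * qp q q (p+2) * (1 - q ^ (p+M+2)))
    = (qp q (a * q ^ (p+2) * t⁻¹) M * qp q (a * q ^ (p+M+3) * t⁻¹) p * qp q (q * t⁻¹) M * qp q t (p+1)) *
      (-(t^(M+1) * (1 - a*q^(2*p+2*M+4)*t⁻¹) * (1 - q^(p+1)) * (1 - a*q^(2*p+M+3)) * (1 - a*q^(p+1)*t⁻¹) * (1 - q^(M+1)*t⁻¹) *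
        ((1 - a*q^(2*p+M+4)) * (1 - a*q^(2*p+3)) * (1 - q^(p+2))))) := by
  have hV1 : (1 : ℂ) - q ^ (p+M+2) ≠ 0 := hQ _ (by omega)
  have hV2 : (1 : ℂ) - a * q ^ (2*p+2) ≠ 0 := hA _ (by omega)
  have hV3 : qp q (a * q ^ (2*p+3)) (M+1) ≠ 0 := qpA_ne hA _ _ (by omega)
  have hV4 : qp q q (M+1) ≠ 0 := qpQ_ne hQ _
  have hV5 : qp q (a * q ^ (p+1)) (p+1) ≠ 0 := qpA_ne hA _ _ (by omega)
  have hV6 : qp q q (p+1) ≠ 0 := qpQ_ne hQ _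
  have hden := mul_ne_zero (mul_ne_zero (mul_ne_zero (mul_ne_zero (mul_ne_zero hV1 hV2) hV3) hV4) hV5) hV6
  rw [Gc]
  rw [show 2*((p+1)+(M+1)) = 2*p+2*M+4 from by ring]
  rw [show 2*(p+1)+(M+1) = 2*p+M+3 from by omega]
  rw [show (p+1)+(M+1)+1 = p+M+3 from by omega]
  rw [show (p+1)-1 = p from rfl]
  rw [show (p+1)+(M+1) = p+M+2 from by omega]
  rw [show 2*(p+1)+1 = 2*p+3 from by ring]
  rw [show 2*(p+1) = 2*p+2 from by ring]
  rw [div_mul_eq_mul_div, div_eq_iff hden]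
  have hd1 : qp q (a*q^(p+1)*t⁻¹) (M+1) = (1 - a*q^(p+1)*t⁻¹) * qp q (a*q^(p+2)*t⁻¹) M := by
    rw [show M+1 = 1+M from by omega,
        qp_split' q (a*q^(p+1)*t⁻¹) (a*q^(p+2)*t⁻¹) 1 M (by ring), qp_one]
  have h2 : qp q (q*t⁻¹) (M+1) = qp q (q*t⁻¹) M * (1 - q^(M+1)*t⁻¹) := by
    rw [qp_succ]; ring
  have hs1 : qp q (a*q^(2*p+3)) (M+2) = qp q (a*q^(2*p+3)) (M+1) * (1 - a*q^(2*p+M+4)) := by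
    rw [show M+2 = (M+1)+1 from rfl, qp_succ]; ring
  have hs2 : qp q (a*q^(p+1)) (p+3)
      = qp q (a*q^(p+1)) (p+1) * ((1 - a*q^(2*p+2)) * (1 - a*q^(2*p+3))) := by
    rw [show p+3 = (p+1)+1+1 from by omega, qp_succ, qp_succ]; ring
  have hs3 : qp q q (p+2) = qp q q (p+1) * (1 - q^(p+2)) := by
    rw [show p+2 = (p+1)+1 from rfl, qp_succ]; ring
  rw [hd1, h2, hs1, hs2, hs3]
  ring

lemma key2 (q t a : ℂ) (ht : t ≠ 0)
    (hA : ∀ e : ℕ, 1 ≤ e → 1 - a * q ^ e ≠ 0)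
    (hQ : ∀ e : ℕ, 1 ≤ e → 1 - q ^ e ≠ 0) (p M : ℕ) :
    Fc q t a (M+1) (p+1) - Fc q t a M (p+1) = Gc q t a M (p+2) - Gc q t a (M+1) (p+1) := by
  have hΔ : qp q (a * q ^ (2*p+3)) (M+2) * qp q q (M+1) * qp q (a * q ^ (p+1)) (p+3) *
      qp q q (p+2) * (1 - q ^ (p+M+2)) ≠ 0 :=
    mul_ne_zero (mul_ne_zero (mul_ne_zero (mul_ne_zero
      (qpA_ne hA _ _ (by omega)) (qpQ_ne hQ _)) (qpA_ne hA _ _ (by omega))) (qpQ_ne hQ _))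
      (hQ _ (by omega))
  apply mul_right_cancel₀ hΔ
  rw [sub_mul, sub_mul, clearA q t a hA hQ p M, clearB q t a hA hQ p M,
      clearC q t a hA hQ p M, clearD q t a hA hQ p M, ← mul_sub, ← mul_sub,
      eE q t a ht p M]

lemma clear1A (q t a : ℂ) (hA : ∀ e : ℕ, 1 ≤ e → 1 - a * q ^ e ≠ 0)
    (hQ : ∀ e : ℕ, 1 ≤ e → 1 - q ^ e ≠ 0) (M : ℕ) :
    Fc q t a (M+1) 0 *
      (qp q (a * q ^ 1) (M+2) * qp q q (M+1) * ((1 - q^(M+1)) * (1 - q^1)))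
    = (qp q (a * q ^ 1 * t⁻¹) M * qp q (q * t⁻¹) M) *
      ((1 - a*q^(M+1)*t⁻¹) * (1 - q^(M+1)*t⁻¹) * t^(M+1) *
        ((1 - a*q^(M+2)) * (1 - q^(M+1)) * (1 - q^1))) := by
  have hU1 : qp q (a * q ^ 1) (M+1) ≠ 0 := qpA_ne hA _ _ (by omega)
  have hU2 : qp q q (M+1) ≠ 0 := qpQ_ne hQ _
  rw [Fc]
  rw [show 2*0+1 = 1 from rfl]
  simp only [qp_zero, mul_one]
  rw [div_mul_eq_mul_div, div_eq_iff (mul_ne_zero hU1 hU2)]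
  have hk1 : qp q (a*q^1*t⁻¹) (M+1) = qp q (a*q^1*t⁻¹) M * (1 - a*q^(M+1)*t⁻¹) := by
    rw [qp_succ]; ring
  have h2 : qp q (q*t⁻¹) (M+1) = qp q (q*t⁻¹) M * (1 - q^(M+1)*t⁻¹) := by
    rw [qp_succ]; ring
  have hs1 : qp q (a*q^1) (M+2) = qp q (a*q^1) (M+1) * (1 - a*q^(M+2)) := by
    rw [show M+2 = (M+1)+1 from rfl, qp_succ]; ring
  rw [hk1, h2, hs1]
  ring

lemma clear1B (q t a : ℂ) (hA : ∀ e : ℕ, 1 ≤ e → 1 - a * q ^ e ≠ 0)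
    (hQ : ∀ e : ℕ, 1 ≤ e → 1 - q ^ e ≠ 0) (M : ℕ) :
    Fc q t a M 0 *
      (qp q (a * q ^ 1) (M+2) * qp q q (M+1) * ((1 - q^(M+1)) * (1 - q^1)))
    = (qp q (a * q ^ 1 * t⁻¹) M * qp q (q * t⁻¹) M) *
      (t^M * ((1 - a*q^(M+1)) * (1 - a*q^(M+2)) * (1 - q^(M+1)) * (1 - q^(M+1)) * (1 - q^1))) := by
  have hU1 : qp q (a * q ^ 1) M ≠ 0 := qpA_ne hA _ _ (by omega)
  have hU2 : qp q q M ≠ 0 := qpQ_ne hQ _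
  rw [Fc]
  rw [show 2*0+1 = 1 from rfl]
  simp only [qp_zero, mul_one]
  rw [div_mul_eq_mul_div, div_eq_iff (mul_ne_zero hU1 hU2)]
  have hs1 : qp q (a*q^1) (M+2) = qp q (a*q^1) M * ((1 - a*q^(M+1)) * (1 - a*q^(M+2))) := by
    rw [show M+2 = M+1+1 from rfl, qp_succ, qp_succ]; ring
  have hs2 : qp q q (M+1) = qp q q M * (1 - q^(M+1)) := by
    rw [qp_succ]; ring
  rw [hs1, hs2]
  ring

lemma clear1C (q t a : ℂ) (hA : ∀ e : ℕ, 1 ≤ e → 1 - a * q ^ e ≠ 0)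
    (hQ : ∀ e : ℕ, 1 ≤ e → 1 - q ^ e ≠ 0) (M : ℕ) :
    Gc q t a M 1 *
      (qp q (a * q ^ 1) (M+2) * qp q q (M+1) * ((1 - q^(M+1)) * (1 - q^1)))
    = (qp q (a * q ^ 1 * t⁻¹) M * qp q (q * t⁻¹) M) *
      (-(t^M * (1 - a*q^(2*M+2)*t⁻¹) * (1 - q^1) * (1 - a*q^(M+2)) * (1 - t) * (1 - q^(M+1)))) := by
  have h1q : (1 : ℂ) - q ≠ 0 := by have := hQ 1 le_rfl; rwa [pow_one] at this
  have hV1 : (1 : ℂ) - q ^ (M+1) ≠ 0 := hQ _ (by omega)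
  have hV2 : (1 : ℂ) - a * q ^ 2 ≠ 0 := hA _ (by omega)
  have hV3 : qp q (a * q ^ 3) M ≠ 0 := qpA_ne hA _ _ (by omega)
  have hV4 : qp q q M ≠ 0 := qpQ_ne hQ _
  have hV5 : (1 : ℂ) - a * q ^ 1 ≠ 0 := hA _ (by omega)
  have hden := mul_ne_zero (mul_ne_zero (mul_ne_zero (mul_ne_zero (mul_ne_zero hV1 hV2) hV3) hV4) hV5) h1q
  rw [Gc]
  rw [show 2*(1+M) = 2*M+2 from by ring]
  rw [show 1+M+1 = M+2 from by omega]
  rw [show 2*1+M = M+2 from by omega]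
  rw [show 2*1+1 = 3 from by norm_num]
  rw [show 2*1 = 2 from by norm_num]
  rw [show (1:ℕ)-1 = 0 from rfl]
  rw [show 1+M = M+1 from by omega]
  simp only [qp_zero, mul_one, qp_one]
  rw [div_mul_eq_mul_div, div_eq_iff hden]
  have hc3 : qp q (a*q^1) (M+2) = (1 - a*q^1) * ((1 - a*q^2) * qp q (a*q^3) M) := by
    rw [show M+2 = 1+(1+M) from by omega,
        qp_split' q (a*q^1) (a*q^2) 1 (1+M) (by ring),
        qp_split' q (a*q^2) (a*q^3) 1 M (by ring),
        qp_one, qp_one]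
  have hs2 : qp q q (M+1) = qp q q M * (1 - q^(M+1)) := by
    rw [qp_succ]; ring
  rw [hc3, hs2]
  ring

lemma key1 (q t a : ℂ) (ht : t ≠ 0)
    (hA : ∀ e : ℕ, 1 ≤ e → 1 - a * q ^ e ≠ 0)
    (hQ : ∀ e : ℕ, 1 ≤ e → 1 - q ^ e ≠ 0) (M : ℕ) :
    Fc q t a (M+1) 0 - Fc q t a M 0 = Gc q t a M 1 := by
  have hΔ : qp q (a * q ^ 1) (M+2) * qp q q (M+1) * ((1 - q^(M+1)) * (1 - q^1)) ≠ 0 :=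
    mul_ne_zero (mul_ne_zero (qpA_ne hA _ _ (by omega)) (qpQ_ne hQ _))
      (mul_ne_zero (hQ _ (by omega)) (hQ 1 (by omega)))
  apply mul_right_cancel₀ hΔ
  rw [sub_mul, clear1A q t a hA hQ M, clear1B q t a hA hQ M, clear1C q t a hA hQ M,
      ← mul_sub, eE0 q t a ht M]

lemma glast (q t a : ℂ) (hA : ∀ e : ℕ, 1 ≤ e → 1 - a * q ^ e ≠ 0)
    (hQ : ∀ e : ℕ, 1 ≤ e → 1 - q ^ e ≠ 0) (n : ℕ) :
    Gc q t a 0 (n+1) = -Fc q t a 0 (n+1) := by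
  have hV1 : (1 : ℂ) - q ^ (n+1) ≠ 0 := hQ _ (by omega)
  have hV2 : (1 : ℂ) - a * q ^ (2*n+2) ≠ 0 := hA _ (by omega)
  have hV3 : qp q (a * q ^ (n+1)) (n+1) ≠ 0 := qpA_ne hA _ _ (by omega)
  have hV4 : qp q q (n+1) ≠ 0 := qpQ_ne hQ _
  rw [Gc, Fc]
  simp only [Nat.add_zero]
  rw [show 2*(n+1)+1 = 2*n+3 from by ring]
  rw [show 2*(n+1) = 2*n+2 from by ring]
  rw [show (n+1)-1 = n from rfl]
  rw [show (n+1)+1 = n+2 from rfl]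
  simp only [qp_zero, mul_one, one_mul, pow_zero]
  rw [← neg_div]
  rw [div_eq_div_iff
    (mul_ne_zero (mul_ne_zero (mul_ne_zero hV1 hV2) hV3) hV4)
    (mul_ne_zero hV3 hV4)]
  have hgl : qp q (a*q^(n+2)*t⁻¹) (n+1) = qp q (a*q^(n+2)*t⁻¹) n * (1 - a*q^(2*n+2)*t⁻¹) := by
    rw [qp_succ]; ring
  rw [hgl]
  ring

lemma core (q t a : ℂ) (ht : t ≠ 0)
    (hA : ∀ e : ℕ, 1 ≤ e → 1 - a * q ^ e ≠ 0)
    (hQ : ∀ e : ℕ, 1 ≤ e → 1 - q ^ e ≠ 0) :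
    ∀ n : ℕ, ∑ l ∈ Finset.range (n+1), Fc q t a (n - l) l = 1 := by
  intro n
  induction n with
  | zero => simp [Fc, qp_zero]
  | succ n ih =>
    have step : ∀ l ∈ Finset.range (n+1),
        Fc q t a (n + 1 - l) l
          = Fc q t a (n - l) l + (Gc q t a (n - l) (l+1) - Gc q t a (n + 1 - l) l) := by
      intro l hl
      have hl' : l < n + 1 := Finset.mem_range.mp hl
      rcases l with _ | p
      · simp only [Nat.sub_zero]
        rw [gzero]
        have h := key1 q t a ht hA hQ n
        linear_combination h
      · have hM : n - (p+1) + 1 = n + 1 - (p+1) := by omega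
        have h := key2 q t a ht hA hQ p (n - (p+1))
        rw [hM] at h
        linear_combination h
    rw [Finset.sum_range_succ, Finset.sum_congr rfl step, Finset.sum_add_distrib, ih]
    have htele : ∑ l ∈ Finset.range (n+1), (Gc q t a (n - l) (l+1) - Gc q t a (n + 1 - l) l)
        = Gc q t a 0 (n+1) - Gc q t a (n+1) 0 := by
      have h := Finset.sum_range_sub (fun l => Gc q t a (n + 1 - l) l) (n+1)
      simp only [Nat.succ_sub_succ, Nat.sub_self, Nat.sub_zero] at h
      exact h
    rw [htele, gzero, glast q t a hA hQ n]
    simp only [Nat.sub_self]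
    ring

end Stmt3Aux

/-- `Σ_{k=j}^i c̃_{ik} d_{kj} = 1` : all entries of the lower triangular matrix
`C̃ C^{-1}` are equal to `1`. -/
theorem stmt3 (q t s : ℂ) (hq : q ≠ 0) (ht : t ≠ 0) (hs : s ≠ 0)
    (ct d : ℕ → ℕ → ℂ)
    (hct : ∀ i j, j ≤ i →
      ct i j = (qp q (s * q ^ (2 * j + 1) * t⁻¹) (i - j) * qp q (q * t⁻¹) (i - j))
              / (qp q (s * q ^ (2 * j + 1)) (i - j) * qp q q (i - j))
              * t ^ (i - j))
    (hct0 : ∀ i j, i < j → ct i j = 0)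
    (hd : ∀ i j, j ≤ i →
      d i j = (qp q (s * q ^ (i + j + 1) * t⁻¹) (i - j) * qp q t (i - j))
              / (qp q (s * q ^ (i + j)) (i - j) * qp q q (i - j)))
    (hd0 : ∀ i j, i < j → d i j = 0)
    (hden : ∀ i j, j ≤ i →
      qp q (s * q ^ (2 * j + 1)) (i - j) * qp q q (i - j) ≠ 0 ∧
      qp q (s * q ^ (i + j)) (i - j) * qp q q (i - j) ≠ 0) :
    ∀ i j : ℕ, j ≤ i → (∑ k ∈ Finset.Icc j i, ct i k * d k j) = 1 := by
  intro i j hij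
  have hS : ∀ e : ℕ, 1 ≤ e → 1 - s * q ^ e ≠ 0 := by
    intro e he
    obtain ⟨e', rfl⟩ : ∃ e', e = e' + 1 := ⟨e - 1, by omega⟩
    have h := (hden (e'+1) 0 (Nat.zero_le _)).1
    rw [Nat.sub_zero] at h
    have h1 : qp q (s * q ^ (2*0+1)) (e'+1) ≠ 0 := left_ne_zero_of_mul h
    rw [qp] at h1
    have h2 := Finset.prod_ne_zero_iff.mp h1 e' (Finset.mem_range.mpr (by omega))
    have h3 : s * q ^ (e'+1) = s * q ^ (2*0+1) * q ^ e' := by ring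
    rw [h3]; exact h2
  have hQ : ∀ e : ℕ, 1 ≤ e → 1 - q ^ e ≠ 0 := by
    intro e he
    obtain ⟨e', rfl⟩ : ∃ e', e = e' + 1 := ⟨e - 1, by omega⟩
    have h := (hden (e'+1) 0 (Nat.zero_le _)).1
    rw [Nat.sub_zero] at h
    have h1 : qp q q (e'+1) ≠ 0 := right_ne_zero_of_mul h
    rw [qp] at h1
    have h2 := Finset.prod_ne_zero_iff.mp h1 e' (Finset.mem_range.mpr (by omega))
    have h3 : q ^ (e'+1) = q * q ^ e' := by ring
    rw [h3]; exact h2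
  have hA : ∀ e : ℕ, 1 ≤ e → 1 - s * q ^ (2*j) * q ^ e ≠ 0 := by
    intro e he
    have h := hS (2*j + e) (by omega)
    rw [pow_add, ← mul_assoc] at h
    exact h
  rw [show Finset.Icc j i = (Finset.range (i - j + 1)).map (addLeftEmbedding j) from by
        ext x
        simp only [Finset.mem_map, Finset.mem_range, Finset.mem_Icc, addLeftEmbedding_apply]
        constructor
        · rintro ⟨h1, h2⟩; exact ⟨x - j, by omega, by omega⟩
        · rintro ⟨a, ha, rfl⟩; omega,
      Finset.sum_map]
  simp only [addLeftEmbedding_apply]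
  have hterm : ∀ l ∈ Finset.range (i - j + 1),
      ct i (j + l) * d (j + l) j = Stmt3Aux.Fc q t (s * q ^ (2*j)) (i - j - l) l := by
    intro l hl
    have hl' : l ≤ i - j := by have := Finset.mem_range.mp hl; omega
    rw [hct i (j+l) (by omega), hd (j+l) j (by omega)]
    rw [show i - (j+l) = i - j - l from by omega]
    rw [show j + l - j = l from by omega]
    rw [Stmt3Aux.Fc]
    rw [show 2*(j+l)+1 = 2*j + (2*l+1) from by ring]
    rw [show j + l + j + 1 = 2*j + (l+1) from by ring]
    rw [show j + l + j = 2*j + l from by ring]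
    rw [pow_add q (2*j) (2*l+1), pow_add q (2*j) (l+1), pow_add q (2*j) l]
    simp only [← mul_assoc]
    ring
  rw [Finset.sum_congr rfl hterm]
  exact Stmt3Aux.core q t (s * q ^ (2*j)) ht hA hQ (i - j)
end
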